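/- Let $\hat{W}_n = \sum_{j\geq 1} X_{n,j}/n$ with $X_{n,j}$ independent Binomial$(n,p_j)$ and $W = \sum_j p_j < \infty$. Then $\mathbb{E}[\hat{W}_n] = W$ and for all $0 < \lambda < n$, $\log \mathbb{E}\, e^{\lambda(\hat{W}_n - W)} \leq \frac{(2W/n)\,\lambda^2}{2(1-\lambda/n)}$. -/

import Mathlib

open MeasureTheory ProbabilityTheory Real Finset
open scoped ENNReal

/-!
Write `T = ∑' j, X j` and `t = λ / n`. The mean is computed termwise (`integral_tsum`). For the
exponential moment, monotone convergence and independence bound `𝔼 e^{tT}` by the supremum of the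
finite products `∏_{j<m} (1 - p_j + p_j e^t)^n`, each at most `exp (n W (e^t - 1))` since
`1 + x ≤ e^x`; so the log-moment generating function of `Ŵ_n - W` at `λ` is at most
`n W (e^t - 1 - t)`, and `e^t ≤ 1 / (1 - t)` turns this into `n W t² / (1 - t)`.
-/

def binomialMass (n : ℕ) (p : ℝ) (k : ℕ) : ℝ :=
  n.choose k * p ^ k * (1 - p) ^ (n - k)

namespace binomialMass

variable {n : ℕ} {p : ℝ}

lemma nonneg (hp0 : 0 ≤ p) (hp1 : p ≤ 1) (k : ℕ) : 0 ≤ binomialMass n p k := by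
  have : 0 ≤ 1 - p := sub_nonneg.2 hp1
  unfold binomialMass
  positivity

lemma eq_zero_of_lt {k : ℕ} (hk : n < k) : binomialMass n p k = 0 := by
  simp [binomialMass, Nat.choose_eq_zero_of_lt hk]

lemma sum_natCast_mul :
    ∑ k ∈ range (n + 1), (k : ℝ) * binomialMass n p k = n * p := by
  have h := congrArg (Polynomial.eval p) (bernsteinPolynomial.sum_smul ℝ n)
  simpa [Polynomial.eval_finsetSum, bernsteinPolynomial, binomialMass, mul_assoc] using h

lemma sum_exp_mul (t : ℝ) :
    ∑ k ∈ range (n + 1), exp (t * k) * binomialMass n p k = (1 - p + p * exp t) ^ n := by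
  rw [show 1 - p + p * exp t = p * exp t + (1 - p) by ring, add_pow]
  refine sum_congr rfl fun k _ => ?_
  rw [binomialMass, mul_comm t, exp_nat_mul, mul_pow]
  ring

end binomialMass

lemma one_sub_add_mul_exp_pow_le {p : ℝ} (hp0 : 0 ≤ p) (hp1 : p ≤ 1) (n : ℕ) (t : ℝ) :
    (1 - p + p * exp t) ^ n ≤ exp (n * p * (exp t - 1)) := by
  have hbase : 0 ≤ 1 - p + p * exp t := by nlinarith [exp_pos t]
  calc (1 - p + p * exp t) ^ n ≤ exp (p * (exp t - 1)) ^ n := by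
        gcongr
        linarith [add_one_le_exp (p * (exp t - 1))]
    _ = exp (n * p * (exp t - 1)) := by rw [← exp_nat_mul, mul_assoc]

lemma exp_sub_one_sub_le_sq_div {t : ℝ} (ht0 : 0 ≤ t) (ht1 : t < 1) :
    exp t - 1 - t ≤ t ^ 2 / (1 - t) := by
  have h1t : 0 < 1 - t := by linarith
  have h := exp_bound_div_one_sub_of_interval ht0 ht1
  have : 1 / (1 - t) - 1 - t = t ^ 2 / (1 - t) := by field_simp; ring
  linarith

lemma prod_range_le_exp_tsum {f c : ℕ → ℝ} (hf0 : ∀ j, 0 ≤ f j) (hfc : ∀ j, f j ≤ exp (c j))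
    (hc0 : ∀ j, 0 ≤ c j) (hc : Summable c) (m : ℕ) :
    ∏ j ∈ range m, f j ≤ exp (∑' j, c j) :=
  calc ∏ j ∈ range m, f j ≤ ∏ j ∈ range m, exp (c j) :=
        prod_le_prod (fun j _ => hf0 j) fun j _ => hfc j
    _ = exp (∑ j ∈ range m, c j) := (exp_sum _ _).symm
    _ ≤ exp (∑' j, c j) := exp_le_exp.2 (hc.sum_le_tsum _ fun j _ => hc0 j)

lemma ofReal_exp_mul_tsum_le_iSup (y : ℕ → ℝ) (t : ℝ) :
    ENNReal.ofReal (exp (t * ∑' j, y j)) ≤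
      ⨆ m, ENNReal.ofReal (exp (t * ∑ j ∈ range m, y j)) := by
  by_cases hy : Summable y
  · have hlim : Filter.Tendsto (fun m => ENNReal.ofReal (exp (t * ∑ j ∈ range m, y j)))
        Filter.atTop (nhds (ENNReal.ofReal (exp (t * ∑' j, y j)))) :=
      (ENNReal.continuous_ofReal.tendsto _).comp
        ((continuous_exp.tendsto _).comp (hy.hasSum.tendsto_sum_nat.const_mul t))
    exact le_of_tendsto' hlim (le_iSup _)
  · -- junk value: `∑' j, y j = 0`, and the `m = 0` term of the supremum is `1`
    rw [tsum_eq_zero_of_not_summable hy]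
    exact le_iSup_of_le 0 (by simp)

section IndependentSums

variable {Ω : Type*} [MeasurableSpace Ω] {μ : Measure Ω} {Y : ℕ → Ω → ℝ} {t : ℝ}

lemma lintegral_ofReal_exp_mul_tsum_le_iSup (hY : ∀ j, Measurable (Y j))
    (hY0 : ∀ j ω, 0 ≤ Y j ω) (ht : 0 ≤ t) :
    ∫⁻ ω, ENNReal.ofReal (exp (t * ∑' j, Y j ω)) ∂μ ≤
      ⨆ m, ∫⁻ ω, ENNReal.ofReal (exp (t * ∑ j ∈ range m, Y j ω)) ∂μ := by
  have hmono : Monotone fun m ω => ENNReal.ofReal (exp (t * ∑ j ∈ range m, Y j ω)) := by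
    refine monotone_nat_of_le_succ fun m ω => ?_
    gcongr
    · exact fun j _ _ => hY0 j ω
    · exact m.le_succ
  have hmeas m : Measurable fun ω => ENNReal.ofReal (exp (t * ∑ j ∈ range m, Y j ω)) :=
    ((measurable_sum _ fun j _ => hY j).const_mul t).exp.ennreal_ofReal
  rw [← lintegral_iSup hmeas hmono]
  exact lintegral_mono fun ω => ofReal_exp_mul_tsum_le_iSup (Y · ω) t

lemma lintegral_ofReal_exp_mul_sum_eq_prod_mgf [IsFiniteMeasure μ] (hindep : iIndepFun Y μ)
    (hY : ∀ j, Measurable (Y j)) (hint : ∀ j, Integrable (fun ω => exp (t * Y j ω)) μ)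
    (s : Finset ℕ) :
    ∫⁻ ω, ENNReal.ofReal (exp (t * ∑ j ∈ s, Y j ω)) ∂μ =
      ENNReal.ofReal (∏ j ∈ s, mgf (Y j) μ t) := by
  rw [← hindep.mgf_sum hY, mgf, ofReal_integral_eq_lintegral_ofReal
    (hindep.integrable_exp_mul_sum hY fun j _ => hint j)
    (Filter.Eventually.of_forall fun ω => (exp_pos _).le)]
  simp only [Finset.sum_apply]

end IndependentSums

section BinomialLaw

variable {Ω : Type*} [MeasurableSpace Ω] {μ : Measure Ω} {Y : Ω → ℕ} {n : ℕ} {p : ℝ}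

lemma lintegral_comp_eq_sum_binomialMass (hY : Measurable Y)
    (hlaw : ∀ k, μ {ω | Y ω = k} = ENNReal.ofReal (binomialMass n p k)) (f : ℕ → ℝ≥0∞) :
    ∫⁻ ω, f (Y ω) ∂μ = ∑ k ∈ range (n + 1), f k * ENNReal.ofReal (binomialMass n p k) := by
  have hmap k : μ.map Y {k} = ENNReal.ofReal (binomialMass n p k) := by
    rw [Measure.map_apply hY (measurableSet_singleton k)]
    exact hlaw k
  rw [← lintegral_map measurable_from_nat hY, lintegral_countable']
  simp_rw [hmap]
  exact tsum_eq_sum fun k hk =>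
    by simp [binomialMass.eq_zero_of_lt (by simpa using hk : n < k)]

lemma integrable_comp_of_binomialMass (hY : Measurable Y)
    (hlaw : ∀ k, μ {ω | Y ω = k} = ENNReal.ofReal (binomialMass n p k)) (g : ℕ → ℝ) :
    Integrable (fun ω => g (Y ω)) μ := by
  refine ⟨(measurable_from_nat.comp hY).aestronglyMeasurable, ?_⟩
  rw [HasFiniteIntegral, lintegral_comp_eq_sum_binomialMass hY hlaw fun k => ‖g k‖ₑ]
  exact ENNReal.sum_lt_top.2 fun k _ => ENNReal.mul_lt_top enorm_lt_top ENNReal.ofReal_lt_top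

lemma integral_comp_eq_sum_binomialMass (hY : Measurable Y)
    (hlaw : ∀ k, μ {ω | Y ω = k} = ENNReal.ofReal (binomialMass n p k))
    (hp0 : 0 ≤ p) (hp1 : p ≤ 1) {g : ℕ → ℝ} (hg : ∀ k, 0 ≤ g k) :
    ∫ ω, g (Y ω) ∂μ = ∑ k ∈ range (n + 1), g k * binomialMass n p k := by
  have hmass := binomialMass.nonneg (n := n) hp0 hp1
  rw [integral_eq_lintegral_of_nonneg_ae (Filter.Eventually.of_forall fun ω => hg _)
      (measurable_from_nat.comp hY).aestronglyMeasurable,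
    lintegral_comp_eq_sum_binomialMass hY hlaw fun k => ENNReal.ofReal (g k)]
  simp_rw [← ENNReal.ofReal_mul (hg _)]
  rw [← ENNReal.ofReal_sum_of_nonneg fun k _ => mul_nonneg (hg k) (hmass k),
    ENNReal.toReal_ofReal (sum_nonneg fun k _ => mul_nonneg (hg k) (hmass k))]

lemma integral_natCast_of_binomialMass (hY : Measurable Y)
    (hlaw : ∀ k, μ {ω | Y ω = k} = ENNReal.ofReal (binomialMass n p k))
    (hp0 : 0 ≤ p) (hp1 : p ≤ 1) :
    ∫ ω, (Y ω : ℝ) ∂μ = n * p := by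
  rw [integral_comp_eq_sum_binomialMass hY hlaw hp0 hp1 Nat.cast_nonneg,
    binomialMass.sum_natCast_mul]

lemma mgf_natCast_le_of_binomialMass (hY : Measurable Y)
    (hlaw : ∀ k, μ {ω | Y ω = k} = ENNReal.ofReal (binomialMass n p k))
    (hp0 : 0 ≤ p) (hp1 : p ≤ 1) (t : ℝ) :
    mgf (fun ω => (Y ω : ℝ)) μ t ≤ exp (n * p * (exp t - 1)) := by
  rw [mgf, integral_comp_eq_sum_binomialMass hY hlaw hp0 hp1 (g := fun k => exp (t * k))
    fun k => (exp_pos _).le, binomialMass.sum_exp_mul]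
  exact one_sub_add_mul_exp_pow_le hp0 hp1 n t

end BinomialLaw

section SumOfBinomials

variable {Ω : Type*} [MeasurableSpace Ω] {μ : Measure Ω} {X : ℕ → Ω → ℕ} {n : ℕ} {p : ℕ → ℝ}

lemma integral_tsum_natCast_of_binomialMass (hX : ∀ j, Measurable (X j))
    (hlaw : ∀ j k, μ {ω | X j ω = k} = ENNReal.ofReal (binomialMass n (p j) k))
    (hp : ∀ j, p j ∈ Set.Icc (0 : ℝ) 1) (hsum : Summable p) :
    ∫ ω, ∑' j, (X j ω : ℝ) ∂μ = n * ∑' j, p j := by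
  have hmean j : ∫ ω, (X j ω : ℝ) ∂μ = n * p j :=
    integral_natCast_of_binomialMass (hX j) (hlaw j) (hp j).1 (hp j).2
  have hnorm j : ∫⁻ ω, ‖(X j ω : ℝ)‖ₑ ∂μ = ENNReal.ofReal (n * p j) := by
    rw [← ofReal_integral_norm_eq_lintegral_enorm
      (integrable_comp_of_binomialMass (hX j) (hlaw j) Nat.cast)]
    simp only [Real.norm_natCast, hmean]
  rw [integral_tsum (f := fun j ω => (X j ω : ℝ))
      (fun j => (measurable_from_nat.comp (hX j)).aestronglyMeasurable),
    tsum_congr hmean, tsum_mul_left]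
  simp only [hnorm]
  rw [← ENNReal.ofReal_tsum_of_nonneg (fun j => mul_nonneg n.cast_nonneg (hp j).1)
    (hsum.mul_left _)]
  exact ENNReal.ofReal_ne_top

lemma lintegral_exp_mul_tsum_natCast_le_of_binomialMass [IsFiniteMeasure μ]
    (hX : ∀ j, Measurable (X j)) (hindep : iIndepFun X μ)
    (hlaw : ∀ j k, μ {ω | X j ω = k} = ENNReal.ofReal (binomialMass n (p j) k))
    (hp : ∀ j, p j ∈ Set.Icc (0 : ℝ) 1) (hsum : Summable p) {t : ℝ} (ht : 0 ≤ t) :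
    ∫⁻ ω, ENNReal.ofReal (exp (t * ∑' j, (X j ω : ℝ))) ∂μ ≤
      ENNReal.ofReal (exp (n * (∑' j, p j) * (exp t - 1))) := by
  set Y : ℕ → Ω → ℝ := fun j ω => X j ω
  have hY j : Measurable (Y j) := measurable_from_nat.comp (hX j)
  have hYindep : iIndepFun Y μ := hindep.comp (fun _ k => (k : ℝ)) fun _ => measurable_from_nat
  have hint j : Integrable (fun ω => exp (t * Y j ω)) μ :=
    integrable_comp_of_binomialMass (hX j) (hlaw j) fun k => exp (t * k)
  have hc0 j : 0 ≤ n * p j * (exp t - 1) :=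
    mul_nonneg (mul_nonneg n.cast_nonneg (hp j).1) (sub_nonneg.2 (one_le_exp ht))
  have hprod m : ∏ j ∈ range m, mgf (Y j) μ t ≤ exp (n * (∑' j, p j) * (exp t - 1)) := by
    rw [← tsum_mul_left, ← tsum_mul_right]
    exact prod_range_le_exp_tsum (fun j => mgf_nonneg)
      (fun j => mgf_natCast_le_of_binomialMass (hX j) (hlaw j) (hp j).1 (hp j).2 t) hc0
      ((hsum.mul_left _).mul_right _) m
  calc _ ≤ ⨆ m, ∫⁻ ω, ENNReal.ofReal (exp (t * ∑ j ∈ range m, Y j ω)) ∂μ :=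
        lintegral_ofReal_exp_mul_tsum_le_iSup hY (fun j ω => (X j ω).cast_nonneg) ht
    _ ≤ _ := iSup_le fun m => by
        rw [lintegral_ofReal_exp_mul_sum_eq_prod_mgf hYindep hY hint]
        exact ENNReal.ofReal_le_ofReal (hprod m)

lemma integrable_exp_mul_tsum_natCast_of_binomialMass [IsFiniteMeasure μ]
    (hX : ∀ j, Measurable (X j)) (hindep : iIndepFun X μ)
    (hlaw : ∀ j k, μ {ω | X j ω = k} = ENNReal.ofReal (binomialMass n (p j) k))
    (hp : ∀ j, p j ∈ Set.Icc (0 : ℝ) 1) (hsum : Summable p) {t : ℝ} (ht : 0 ≤ t) :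
    Integrable (fun ω => exp (t * ∑' j, (X j ω : ℝ))) μ :=
  (lintegral_ofReal_ne_top_iff_integrable
    ((Measurable.tsum fun j => measurable_from_nat.comp (hX j)).const_mul
      t).exp.aestronglyMeasurable
    (Filter.Eventually.of_forall fun _ => (exp_pos _).le)).1
    (ne_top_of_le_ne_top ENNReal.ofReal_ne_top
      (lintegral_exp_mul_tsum_natCast_le_of_binomialMass hX hindep hlaw hp hsum ht))

lemma cgf_tsum_natCast_le_of_binomialMass [IsProbabilityMeasure μ]
    (hX : ∀ j, Measurable (X j)) (hindep : iIndepFun X μ)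
    (hlaw : ∀ j k, μ {ω | X j ω = k} = ENNReal.ofReal (binomialMass n (p j) k))
    (hp : ∀ j, p j ∈ Set.Icc (0 : ℝ) 1) (hsum : Summable p) {t : ℝ} (ht : 0 ≤ t) :
    cgf (fun ω => ∑' j, (X j ω : ℝ)) μ t ≤ n * (∑' j, p j) * (exp t - 1) := by
  have hint := integrable_exp_mul_tsum_natCast_of_binomialMass hX hindep hlaw hp hsum ht
  refine (log_le_iff_le_exp (mgf_pos hint)).2 ?_
  rw [mgf, integral_eq_lintegral_of_nonneg_ae
    (Filter.Eventually.of_forall fun _ => (exp_pos _).le) hint.aestronglyMeasurable]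
  exact ENNReal.toReal_le_of_le_ofReal (exp_pos _).le
    (lintegral_exp_mul_tsum_natCast_le_of_binomialMass hX hindep hlaw hp hsum ht)

end SumOfBinomials

theorem stmt
    {Ω : Type*} [MeasurableSpace Ω] (μ : Measure Ω) [IsProbabilityMeasure μ]
    (p : ℕ → ℝ) (hp : ∀ j, p j ∈ Set.Ioo (0 : ℝ) 1) (hsum : Summable p)
    (n : ℕ) (X : ℕ → Ω → ℕ)
    (hmeas : ∀ j, Measurable (X j))
    (hindep : iIndepFun X μ)
    (hbin : ∀ j k, μ {ω | X j ω = k} =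
      ENNReal.ofReal ((n.choose k : ℝ) * p j ^ k * (1 - p j) ^ (n - k)))
    (W : ℝ) (hW : ∑' j, p j = W) (hn : 1 ≤ n) :
    (∫ ω, (∑' j, (X j ω : ℝ)) / n ∂μ) = W ∧
    ∀ lam : ℝ, 0 < lam → lam < n →
      Real.log (∫ ω, Real.exp (lam * ((∑' j, (X j ω : ℝ)) / n - W)) ∂μ)
        ≤ (2 * W / n) * lam ^ 2 / (2 * (1 - lam / n)) := by
  have hn0 : (0 : ℝ) < n := by exact_mod_cast hn
  have hW0 : 0 ≤ W := hW ▸ tsum_nonneg fun j => (hp j).1.le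
  have hp' j : p j ∈ Set.Icc (0 : ℝ) 1 := Set.Ioo_subset_Icc_self (hp j)
  refine ⟨?mean, fun lam hlam hlamn => ?_⟩
  case mean =>
    rw [integral_div, integral_tsum_natCast_of_binomialMass hmeas hbin hp' hsum, hW,
      mul_div_cancel_left₀ W hn0.ne']
  set T : Ω → ℝ := fun ω => ∑' j, (X j ω : ℝ)
  set t := lam / n with ht
  have ht0 : 0 ≤ t := by positivity
  have ht1 : t < 1 := (div_lt_one hn0).2 hlamn
  have hlam_eq : lam = n * t := by rw [ht]; field_simp
  have hint := integrable_exp_mul_tsum_natCast_of_binomialMass hmeas hindep hbin hp' hsum ht0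
  have hcentre : ∫ ω, exp (lam * (T ω / n - W)) ∂μ = exp (-(lam * W)) * mgf T μ t := by
    rw [mgf, ← integral_const_mul]
    congr 1 with ω
    rw [← exp_add, hlam_eq]
    congr 1
    field_simp
    ring
  rw [hcentre, log_mul (exp_pos _).ne' (mgf_pos hint).ne', log_exp]
  calc -(lam * W) + cgf T μ t ≤ -(lam * W) + n * W * (exp t - 1) := by
        gcongr
        exact hW ▸ cgf_tsum_natCast_le_of_binomialMass hmeas hindep hbin hp' hsum ht0
    _ = n * W * (exp t - 1 - t) := by rw [hlam_eq]; ring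
    _ ≤ n * W * (t ^ 2 / (1 - t)) := by
      gcongr
      exact exp_sub_one_sub_le_sq_div ht0 ht1
    _ = (2 * W / n) * lam ^ 2 / (2 * (1 - lam / n)) := by
      have : 1 - t ≠ 0 := by linarith
      rw [hlam_eq]
      field_simp
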